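/- Let P ∈ ℝ^{n×n} have nonnegative entries, γ ≥ 0 with γ‖P‖ < 1, and L := (I − γP)⁻¹. Define the Bonacich centrality v^i := ∑_{m=1}^n L_{mi} and v^i_k := (∑_{m=1}^n L_{mk}) · L_{ki} / L_{kk}. Then v^i ≥ v^i_k for all i, k. -/

import Mathlib

/-!
With `A = γ • P`, fix `i`, `k` and put `x m = L m i * L k k - L m k * L k i`. Then `x = L c`
with `c = L k k • e i - L k i • e k`, so `x = A x + c`, and `x k = 0`. Zeroing row `k` of this
equation gives `x = (D A) x + D c` with `D` the projection off `k`; now `D c ≥ 0` and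
`‖D A‖ ≤ ‖A‖ < 1`, so `x = (1 - D A)⁻¹ (D c) ≥ 0` because `(1 - D A)⁻¹ = ∑ (D A)ᵗ` is entrywise
nonnegative.
-/

open Matrix
open scoped Matrix.Norms.L2Operator

namespace Matrix

variable {ι : Type*} [Fintype ι] [DecidableEq ι]

lemma isUnit_one_sub {A : Matrix ι ι ℝ} (h : ‖A‖ < 1) : IsUnit (1 - A) := by
  simpa using (Units.oneSub A h).isUnit

lemma inv_one_sub_apply_nonneg {A : Matrix ι ι ℝ} (hA : ∀ i j, 0 ≤ A i j) (h : ‖A‖ < 1)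
    (i j : ι) : 0 ≤ (1 - A)⁻¹ i j := by
  rw [nonsing_inv_eq_ringInverse]
  exact (Pi.hasSum.1 (Pi.hasSum.1 (hasSum_geom_series_inverse A h) i) j).nonneg
    fun t => pow_apply_nonneg hA t i j

lemma nonneg_of_eq_mulVec_add {A : Matrix ι ι ℝ} (hA : ∀ i j, 0 ≤ A i j) (h : ‖A‖ < 1)
    {x c : ι → ℝ} (hx : x = A *ᵥ x + c) (hc : ∀ j, 0 ≤ c j) (i : ι) : 0 ≤ x i := by
  have hc' : (1 - A) *ᵥ x = c := by
    rw [sub_mulVec, one_mulVec, sub_eq_iff_eq_add', ← hx]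
  have hdet := (isUnit_iff_isUnit_det _).1 (isUnit_one_sub h)
  rw [show x = (1 - A)⁻¹ *ᵥ c by rw [← hc', mulVec_mulVec, nonsing_inv_mul _ hdet, one_mulVec]]
  exact Finset.sum_nonneg fun j _ => mul_nonneg (inv_one_sub_apply_nonneg hA h i j) (hc j)

lemma nonneg_of_eq_mulVec_add_of_apply_eq_zero {A : Matrix ι ι ℝ} (hA : ∀ i j, 0 ≤ A i j)
    (h : ‖A‖ < 1) {x c : ι → ℝ} (hx : x = A *ᵥ x + c) {k : ι} (hxk : x k = 0)
    (hc : ∀ j, j ≠ k → 0 ≤ c j) (i : ι) : 0 ≤ x i := by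
  set d : ι → ℝ := fun j => if j = k then 0 else 1
  have hd : ‖d‖ ≤ 1 := by
    refine pi_norm_le_iff_of_nonneg zero_le_one |>.2 fun j => ?_
    by_cases hj : j = k <;> simp [d, hj]
  have hdx : diagonal d *ᵥ x = x := by
    ext j; by_cases hj : j = k <;> simp [d, hj, mulVec_diagonal, hxk]
  refine nonneg_of_eq_mulVec_add (A := diagonal d * A) (c := diagonal d *ᵥ c) ?_ ?_ ?_ ?_ i
  · intro j l; by_cases hj : j = k <;> simp [d, hj, diagonal_mul, hA]
  · calc ‖diagonal d * A‖ ≤ ‖diagonal d‖ * ‖A‖ := norm_mul_le _ _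
      _ ≤ 1 * ‖A‖ := by rw [l2_opNorm_diagonal]; gcongr
      _ < 1 := by rwa [one_mul]
  · conv_lhs => rw [← hdx, hx]
    rw [mulVec_add, mulVec_mulVec]
  · intro j; by_cases hj : j = k <;> simp [d, hj, mulVec_diagonal, hc]

lemma inv_one_sub_apply_mul_apply_le {A : Matrix ι ι ℝ} (hA : ∀ i j, 0 ≤ A i j) (h : ‖A‖ < 1)
    (m k i : ι) :
    (1 - A)⁻¹ m k * (1 - A)⁻¹ k i ≤ (1 - A)⁻¹ m i * (1 - A)⁻¹ k k := by
  set L := (1 - A)⁻¹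
  set c : ι → ℝ := Pi.single i (L k k) - Pi.single k (L k i)
  set x : ι → ℝ := fun m => L m i * L k k - L m k * L k i
  have hxc : x = L *ᵥ c := by
    ext m; simp [x, c, mulVec_sub, mulVec_single, mul_comm]
  have hx : x = A *ᵥ x + c := by
    have hdet := (isUnit_iff_isUnit_det _).1 (isUnit_one_sub h)
    have : (1 - A) *ᵥ x = c := by rw [hxc, mulVec_mulVec, mul_nonsing_inv _ hdet, one_mulVec]
    rw [← this, sub_mulVec, one_mulVec, add_sub_cancel]
  have hc : ∀ j, j ≠ k → 0 ≤ c j := by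
    intro j hj
    simp only [c, Pi.sub_apply, Pi.single_eq_of_ne hj, sub_zero, Pi.single_apply]
    split_ifs
    exacts [inv_one_sub_apply_nonneg hA h k k, le_rfl]
  simpa [x] using nonneg_of_eq_mulVec_add_of_apply_eq_zero hA h hx (by simp [x, mul_comm]) hc m

end Matrix

theorem stmt_13 {n : ℕ} (P : Matrix (Fin n) (Fin n) ℝ) (γ : ℝ) (hγ : 0 ≤ γ)
    (hnonneg : ∀ i j, 0 ≤ P i j) (hnorm : γ * ‖P‖ < 1)
    (L : Matrix (Fin n) (Fin n) ℝ) (hL : L = (1 - γ • P)⁻¹)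
    (v : Fin n → ℝ) (hv : ∀ i, v i = ∑ m, L m i)
    (vk : Fin n → Fin n → ℝ) (hvk : ∀ i k, vk i k = (∑ m, L m k) * L k i / L k k) :
    ∀ i k, vk i k ≤ v i := by
  intro i k
  have hA : ∀ i j, 0 ≤ (γ • P) i j := fun i j => mul_nonneg hγ (hnonneg i j)
  have hA1 : ‖γ • P‖ < 1 := by rwa [norm_smul, Real.norm_of_nonneg hγ]
  have hLnonneg : ∀ a b, 0 ≤ L a b := hL ▸ inv_one_sub_apply_nonneg hA hA1
  rw [hvk, hv]
  refine div_le_of_le_mul₀ (hLnonneg k k) (Finset.sum_nonneg fun m _ => hLnonneg m i) ?_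
  rw [Finset.sum_mul, Finset.sum_mul]
  exact Finset.sum_le_sum fun m _ => hL ▸ inv_one_sub_apply_mul_apply_le hA hA1 m k i
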